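/- Let (A,≺,≻,α,β) be a BiHom-Leibniz dendriform algebra over a field K. Then the bilinear operation [x,y] = x≺y + x≻y makes (A,[·,·],α,β) a BiHom-Leibniz algebra, i.e. [αβ(x),[y,z]] = [[β(x),y],β(z)] + [β(y),[α(x),z]] for all x,y,z ∈ A. -/
import Mathlib


/-- A BiHom-Leibniz algebra `(A, br, α, β)`: `α` and `β` commute and the
BiHom-Leibniz identity holds. -/
def BiHomLeibniz {K A : Type*} [Field K] [AddCommGroup A] [Module K A]
    (br : A →ₗ[K] A →ₗ[K] A) (α β : A →ₗ[K] A) : Prop :=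
  (∀ x : A, α (β x) = β (α x)) ∧
  (∀ x y z : A,
    br (α (β x)) (br y z) = br (br (β x) y) (β z) + br (β y) (br (α x) z))


/-- A BiHom-Leibniz dendriform algebra `(A, ≺, ≻, α, β)`, with `p = ≺`,
`s = ≻` and `[x,y] = x≺y + x≻y`. -/
def BiHomLeibnizDendriform {K A : Type*} [Field K] [AddCommGroup A] [Module K A]
    (p s : A →ₗ[K] A →ₗ[K] A) (α β : A →ₗ[K] A) : Prop :=
  (∀ x : A, α (β x) = β (α x)) ∧
  (∀ x y z : A, s (p (β x) y + s (β x) y) (β z) =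
      s (α (β x)) (s y z) - s (β y) (s (α x) z)) ∧
  (∀ x y z : A, s (α (β x)) (p y z) =
      p (s (β x) y) (β z) + p (β y) (p (α x) z + s (α x) z)) ∧
  (∀ x y z : A, p (α (β x)) (p y z + s y z) =
      p (p (β x) y) (β z) + s (β y) (p (α x) z))

/-- the operation `[x,y] = x≺y + x≻y` of a BiHom-Leibniz
dendriform algebra defines a BiHom-Leibniz algebra. -/
theorem biHomLeibniz_of_biHomLeibnizDendriform
    {K A : Type*} [Field K] [AddCommGroup A] [Module K A]
    (p s : A →ₗ[K] A →ₗ[K] A) (α β : A →ₗ[K] A)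
    (h : BiHomLeibnizDendriform p s α β) :
    BiHomLeibniz (p + s) α β := by
  obtain ⟨hc, h1, h2, h3⟩ := h
  refine ⟨hc, fun x y z => ?_⟩
  have e1 := h1 x y z
  have e2 := h2 x y z
  have e3 := h3 x y z
  simp only [LinearMap.add_apply, map_add] at *
  linear_combination (norm := abel) e2 + e3 - e1
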